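/- Let r ≥ 1 and let m_1, …, m_r and n_1, …, n_r be positive integers. The following are equivalent: (1) the group G_{m_1,n_1,…,m_r,n_r} presented by ⟨x_1, …, x_r : x_1^{m_1} = 1, x_i^{n_i} = x_{i+1}^{m_{i+1}} for i = 1, …, r−1, x_r^{n_r} = 1⟩ is trivial; (2) its abelianization, namely the quotient of ℤ^r by the subgroup generated by m_1 e_1, n_i e_i − m_{i+1} e_{i+1} (i = 1, …, r−1), and n_r e_r, is trivial; (3) gcd(m_i, n_j) = 1 for all indices with 1 ≤ i ≤ j ≤ r. -/
import Mathlib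

/-- The relators of the group `G_{m_1,n_1,…,m_r,n_r} = ⟨x_1, …, x_r :
x_1^{m_1} = 1, x_i^{n_i} = x_{i+1}^{m_{i+1}} (i = 1, …, r−1), x_r^{n_r} = 1⟩`,
as elements of the free group on `r = r' + 1` generators. -/
def fullRels (r' : ℕ) (m n : Fin (r' + 1) → ℕ) :
    Set (FreeGroup (Fin (r' + 1))) :=
  {FreeGroup.of (0 : Fin (r' + 1)) ^ m 0} ∪
    Set.range (fun i : Fin r' =>
      FreeGroup.of i.castSucc ^ n i.castSucc * (FreeGroup.of i.succ ^ m i.succ)⁻¹) ∪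
    {FreeGroup.of (Fin.last r') ^ n (Fin.last r')}

section
variable {r' : ℕ} {m n : Fin (r' + 1) → ℕ}

lemma mem_rel_one : FreeGroup.of (0 : Fin (r' + 1)) ^ m 0 ∈ fullRels r' m n :=
  Or.inl (Or.inl rfl)

lemma mem_rel_mid (i : Fin r') :
    FreeGroup.of i.castSucc ^ n i.castSucc * (FreeGroup.of i.succ ^ m i.succ)⁻¹ ∈
      fullRels r' m n :=
  Or.inl (Or.inr ⟨i, rfl⟩)

lemma mem_rel_last : FreeGroup.of (Fin.last r') ^ n (Fin.last r') ∈ fullRels r' m n :=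
  Or.inr rfl

lemma pg_rel_eq_one {g : FreeGroup (Fin (r' + 1))} (h : g ∈ fullRels r' m n) :
    (QuotientGroup.mk g : PresentedGroup (fullRels r' m n)) = 1 :=
  (QuotientGroup.eq_one_iff g).2 (Subgroup.subset_normalClosure h)

lemma pg_one : (PresentedGroup.of 0 : PresentedGroup (fullRels r' m n)) ^ m 0 = 1 :=
  pg_rel_eq_one mem_rel_one

lemma pg_mid (i : Fin r') :
    (PresentedGroup.of i.castSucc : PresentedGroup (fullRels r' m n)) ^ n i.castSucc =
      PresentedGroup.of i.succ ^ m i.succ := by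
  have := pg_rel_eq_one (m := m) (n := n) (mem_rel_mid i)
  have h2 : (QuotientGroup.mk (FreeGroup.of i.castSucc ^ n i.castSucc *
      (FreeGroup.of i.succ ^ m i.succ)⁻¹) : PresentedGroup (fullRels r' m n)) =
      PresentedGroup.of i.castSucc ^ n i.castSucc * (PresentedGroup.of i.succ ^ m i.succ)⁻¹ := by
    rfl
  rw [h2] at this
  exact mul_inv_eq_one.mp this

lemma pg_last :
    (PresentedGroup.of (Fin.last r') : PresentedGroup (fullRels r' m n)) ^ n (Fin.last r') = 1 :=
  pg_rel_eq_one mem_rel_last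
end

section
variable {r' : ℕ} {m n : Fin (r' + 1) → ℕ}

lemma claimA (hm : ∀ i, 0 < m i)
    (h3 : ∀ i j : Fin (r' + 1), i ≤ j → Nat.gcd (m i) (n j) = 1) (k : Fin (r' + 1)) :
    ∃ M : ℕ, 0 < M ∧ (PresentedGroup.of k : PresentedGroup (fullRels r' m n)) ^ M = 1 ∧
      ∀ j, k ≤ j → Nat.Coprime M (n j) := by
  induction k using Fin.induction with
  | zero =>
    exact ⟨m 0, hm 0, pg_one, fun j _ => h3 0 j (Fin.zero_le j)⟩
  | succ i ih =>
    obtain ⟨M, hM, hpow, hcop⟩ := ih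
    refine ⟨M * m i.succ, Nat.mul_pos hM (hm _), ?_, ?_⟩
    · calc (PresentedGroup.of i.succ : PresentedGroup (fullRels r' m n)) ^ (M * m i.succ)
          = ((PresentedGroup.of i.succ) ^ m i.succ) ^ M := by rw [← pow_mul, Nat.mul_comm]
        _ = ((PresentedGroup.of i.castSucc) ^ n i.castSucc) ^ M := by rw [pg_mid]
        _ = ((PresentedGroup.of i.castSucc) ^ M) ^ n i.castSucc := by
            rw [← pow_mul, Nat.mul_comm, pow_mul]
        _ = 1 := by rw [hpow, one_pow]
    · intro j hj
      exact Nat.Coprime.mul ((hcop j (le_trans (Fin.castSucc_le_succ i) hj)))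
        (h3 i.succ j hj)

lemma claimB (hn : ∀ j, 0 < n j)
    (h3 : ∀ i j : Fin (r' + 1), i ≤ j → Nat.gcd (m i) (n j) = 1) (k : Fin (r' + 1)) :
    ∃ N : ℕ, 0 < N ∧ (PresentedGroup.of k : PresentedGroup (fullRels r' m n)) ^ N = 1 ∧
      ∀ M : ℕ, (∀ j, k ≤ j → Nat.Coprime M (n j)) → Nat.Coprime M N := by
  induction k using Fin.reverseInduction with
  | last =>
    exact ⟨n (Fin.last r'), hn _, pg_last, fun M hM => hM _ le_rfl⟩
  | cast i ih =>
    obtain ⟨N, hN, hpow, hcop⟩ := ih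
    refine ⟨n i.castSucc * N, Nat.mul_pos (hn _) hN, ?_, ?_⟩
    · calc (PresentedGroup.of i.castSucc : PresentedGroup (fullRels r' m n)) ^ (n i.castSucc * N)
          = ((PresentedGroup.of i.castSucc) ^ n i.castSucc) ^ N := by rw [← pow_mul]
        _ = ((PresentedGroup.of i.succ) ^ m i.succ) ^ N := by rw [pg_mid]
        _ = ((PresentedGroup.of i.succ) ^ N) ^ m i.succ := by
            rw [← pow_mul, Nat.mul_comm, pow_mul]
        _ = 1 := by rw [hpow, one_pow]
    · intro M hM
      exact Nat.Coprime.mul_right (hM _ le_rfl)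
        (hcop M (fun j hj => hM j (le_trans (Fin.castSucc_le_succ i) hj)))

lemma gen_eq_one (hm : ∀ i, 0 < m i) (hn : ∀ j, 0 < n j)
    (h3 : ∀ i j : Fin (r' + 1), i ≤ j → Nat.gcd (m i) (n j) = 1) (k : Fin (r' + 1)) :
    (PresentedGroup.of k : PresentedGroup (fullRels r' m n)) = 1 := by
  obtain ⟨M, hM, hMpow, hMcop⟩ := claimA hm h3 k
  obtain ⟨N, hN, hNpow, hNcop⟩ := claimB hn h3 k
  have hcop : Nat.Coprime M N := hNcop M hMcop
  have h1 : orderOf (PresentedGroup.of k : PresentedGroup (fullRels r' m n)) ∣ Nat.gcd M N :=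
    Nat.dvd_gcd (orderOf_dvd_of_pow_eq_one hMpow) (orderOf_dvd_of_pow_eq_one hNpow)
  rw [hcop] at h1
  exact orderOf_eq_one_iff.mp (Nat.dvd_one.mp h1)

lemma dir31 (hm : ∀ i, 0 < m i) (hn : ∀ j, 0 < n j)
    (h3 : ∀ i j : Fin (r' + 1), i ≤ j → Nat.gcd (m i) (n j) = 1)
    (x : PresentedGroup (fullRels r' m n)) : x = 1 := by
  have hx : x ∈ Subgroup.closure (Set.range (PresentedGroup.of (rels := fullRels r' m n))) := by
    rw [PresentedGroup.closure_range_of]; trivial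
  have : Subgroup.closure (Set.range (PresentedGroup.of (rels := fullRels r' m n))) ≤ ⊥ := by
    rw [Subgroup.closure_le]
    rintro y ⟨k, rfl⟩
    exact gen_eq_one hm hn h3 k
  simpa using this hx
end

/-- The corresponding relation vectors `m_1 e_1`, `n_i e_i − m_{i+1} e_{i+1}`
(`i = 1, …, r−1`) and `n_r e_r` in the free abelian group `ℤ^r`, where
`r = r' + 1`. -/
def relVectors (r' : ℕ) (m n : Fin (r' + 1) → ℕ) :
    Set (Fin (r' + 1) → ℤ) :=
  {Pi.single (0 : Fin (r' + 1)) (m 0 : ℤ)} ∪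
    Set.range (fun i : Fin r' =>
      Pi.single i.castSucc (n i.castSucc : ℤ) - Pi.single i.succ (m i.succ : ℤ)) ∪
    {Pi.single (Fin.last r') (n (Fin.last r') : ℤ)}

section
variable {r' : ℕ} {m n : Fin (r' + 1) → ℕ}

abbrev Qab (r' : ℕ) (m n : Fin (r' + 1) → ℕ) :=
  (Fin (r' + 1) → ℤ) ⧸ AddSubgroup.closure (relVectors r' m n)

lemma qab_single_pow (i : Fin (r' + 1)) (k : ℕ) :
    (Multiplicative.ofAdd (QuotientAddGroup.mk (Pi.single i (1 : ℤ)) : Qab r' m n)) ^ k =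
      Multiplicative.ofAdd (QuotientAddGroup.mk (Pi.single i (k : ℤ))) := by
  rw [← ofAdd_nsmul, ← QuotientAddGroup.mk_nsmul]
  have h : k • (Pi.single i (1 : ℤ) : Fin (r' + 1) → ℤ) = Pi.single i (k : ℤ) := by
    ext a
    by_cases h : a = i
    · subst h; simp
    · simp [Pi.single_eq_of_ne h]
  rw [h]

lemma lift_rel_eq_one (g : FreeGroup (Fin (r' + 1))) (hg : g ∈ fullRels r' m n) :
    FreeGroup.lift (fun i : Fin (r' + 1) =>
      Multiplicative.ofAdd (QuotientAddGroup.mk (Pi.single i (1 : ℤ)) : Qab r' m n)) g = 1 := by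
  rcases hg with (h1 | ⟨i, rfl⟩) | h2
  · rw [Set.mem_singleton_iff.mp h1]
    rw [map_pow, FreeGroup.lift_apply_of, qab_single_pow]
    rw [← ofAdd_zero]
    congr 1
    rw [QuotientAddGroup.eq_zero_iff]
    exact AddSubgroup.subset_closure (Or.inl (Or.inl rfl))
  · rw [map_mul, map_inv, map_pow, map_pow, FreeGroup.lift_apply_of, FreeGroup.lift_apply_of,
      qab_single_pow, qab_single_pow, ← ofAdd_neg, ← ofAdd_add]
    rw [← ofAdd_zero]
    congr 1
    rw [← QuotientAddGroup.mk_neg, ← QuotientAddGroup.mk_add, QuotientAddGroup.eq_zero_iff]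
    exact AddSubgroup.subset_closure (Or.inl (Or.inr ⟨i, by abel⟩))
  · rw [Set.mem_singleton_iff.mp h2]
    rw [map_pow, FreeGroup.lift_apply_of, qab_single_pow]
    rw [← ofAdd_zero]
    congr 1
    rw [QuotientAddGroup.eq_zero_iff]
    exact AddSubgroup.subset_closure (Or.inr rfl)

lemma dir12 (h1 : ∀ x : PresentedGroup (fullRels r' m n), x = 1)
    (x : Qab r' m n) : x = 0 := by
  -- each generator image is zero
  have hgen : ∀ i : Fin (r' + 1),
      (QuotientAddGroup.mk (Pi.single i (1 : ℤ)) : Qab r' m n) = 0 := by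
    intro i
    have := congrArg (PresentedGroup.toGroup (f := fun i : Fin (r' + 1) =>
      Multiplicative.ofAdd (QuotientAddGroup.mk (Pi.single i (1 : ℤ)) : Qab r' m n))
      lift_rel_eq_one) (h1 (PresentedGroup.of i))
    rw [PresentedGroup.toGroup.of, map_one] at this
    exact Multiplicative.ofAdd.injective this
  obtain ⟨v, rfl⟩ := QuotientAddGroup.mk_surjective x
  have hv : v = ∑ i : Fin (r' + 1), v i • Pi.single i (1 : ℤ) := by
    ext a
    rw [Finset.sum_apply]
    rw [Finset.sum_eq_single a]
    · simp
    · intro b _ hb; simp [Pi.single_eq_of_ne (Ne.symm hb)]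
    · simp
  rw [hv]
  rw [← QuotientAddGroup.mk'_apply, map_sum]
  refine Finset.sum_eq_zero ?_
  intro i _
  rw [map_zsmul, QuotientAddGroup.mk'_apply, hgen, smul_zero]
end

section
variable {r' : ℕ} {m n : Fin (r' + 1) → ℕ}

lemma dir23 (hm : ∀ i, 0 < m i)
    (h2 : ∀ x : Qab r' m n, x = 0)
    (i j : Fin (r' + 1)) (hij : i ≤ j) : Nat.gcd (m i) (n j) = 1 := by
  by_contra hne
  obtain ⟨p, hp, hpdvd⟩ := Nat.exists_prime_and_dvd hne
  haveI : Fact p.Prime := ⟨hp⟩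
  have hpm : p ∣ m i := hpdvd.trans (Nat.gcd_dvd_left _ _)
  have hpn : p ∣ n j := hpdvd.trans (Nat.gcd_dvd_right _ _)
  set T : Finset (Fin (r' + 1)) :=
    Finset.univ.filter (fun b => i ≤ b ∧ b ≤ j ∧ p ∣ n b) with hT
  have hjT : j ∈ T := by simp [hT, hij, hpn]
  set j' : Fin (r' + 1) := T.min' ⟨j, hjT⟩ with hj'
  have hj'T : j' ∈ T := T.min'_mem _
  rw [hT, Finset.mem_filter] at hj'T
  obtain ⟨-, hij', hj'j, hpnj'⟩ := hj'T
  have hmin : ∀ b : Fin (r' + 1), i ≤ b → b ≤ j → p ∣ n b → j' ≤ b := by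
    intro b h1 h2 h3
    exact T.min'_le b (by simp [hT, h1, h2, h3])
  -- the coefficients
  set N' : ℕ → ZMod p := fun l => if h : l < r' + 1 then (n ⟨l, h⟩ : ZMod p) else 1 with hN'
  set M' : ℕ → ZMod p := fun l => if h : l < r' + 1 then (m ⟨l, h⟩ : ZMod p) else 1 with hM'
  set c : Fin (r' + 1) → ZMod p := fun k =>
    if i.val ≤ k.val ∧ k.val ≤ j'.val then
      (∏ l ∈ Finset.Ico i.val k.val, N' l) *
        (∏ l ∈ Finset.Ico (k.val + 1) (j'.val + 1), M' l)
    else 0 with hc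
  set f : (Fin (r' + 1) → ℤ) →+ ZMod p :=
    AddMonoidHom.mk' (fun v => ∑ k, (v k : ZMod p) * c k) (by
      intro v w
      simp only [Pi.add_apply, Int.cast_add, add_mul]
      rw [Finset.sum_add_distrib]) with hf
  have f_single : ∀ (a : Fin (r' + 1)) (x : ℤ), f (Pi.single a x) = (x : ZMod p) * c a := by
    intro a x
    show ∑ k, ((Pi.single a x : Fin (r' + 1) → ℤ) k : ZMod p) * c k = _
    rw [Finset.sum_eq_single a]
    · simp
    · intro b _ hb
      rw [Pi.single_eq_of_ne hb]; simp
    · simp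
  have hker : ∀ v ∈ relVectors r' m n, v ∈ f.ker := by
    rintro v ((h1 | ⟨k, rfl⟩) | hlast)
    · rw [Set.mem_singleton_iff.mp h1, AddMonoidHom.mem_ker, f_single]
      by_cases h0 : i.val ≤ 0
      · have : i = 0 := Fin.ext (Nat.le_zero.mp h0)
        subst this
        rw [show ((m 0 : ℤ) : ZMod p) = ((m 0 : ℕ) : ZMod p) by push_cast; ring]
        rw [(ZMod.natCast_eq_zero_iff _ _).mpr hpm, zero_mul]
      · rw [hc]
        simp only []
        rw [if_neg (by simpa using h0), mul_zero]
    · rw [AddMonoidHom.mem_ker, map_sub, f_single, f_single, sub_eq_zero]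
      push_cast
      by_cases hA : k.val + 1 < i.val
      · rw [hc]; simp only [Fin.coe_castSucc, Fin.val_succ]
        rw [if_neg (by omega), if_neg (by omega), mul_zero, mul_zero]
      by_cases hB : k.val + 1 = i.val
      · have hksi : k.succ = i := Fin.ext (by rw [Fin.val_succ]; omega)
        rw [hc]; simp only [Fin.coe_castSucc, Fin.val_succ]
        rw [if_neg (by omega), mul_zero, hksi,
          (ZMod.natCast_eq_zero_iff _ _).mpr hpm, zero_mul]
      have hiK : i.val ≤ k.val := by omega
      by_cases hC : k.val < j'.val
      · rw [hc]; simp only [Fin.coe_castSucc, Fin.val_succ]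
        rw [if_pos (by omega), if_pos (by omega)]
        have e1 : ∏ l ∈ Finset.Ico i.val (k.val + 1), N' l =
            (∏ l ∈ Finset.Ico i.val k.val, N' l) * N' k.val :=
          Finset.prod_Ico_succ_top hiK _
        have e2 : ∏ l ∈ Finset.Ico (k.val + 1) (j'.val + 1), M' l =
            M' (k.val + 1) * ∏ l ∈ Finset.Ico (k.val + 2) (j'.val + 1), M' l :=
          Finset.prod_eq_prod_Ico_succ_bot (by omega) _
        have eN : N' k.val = ((n k.castSucc : ℕ) : ZMod p) := by
          rw [hN']; simp only []
          rw [dif_pos (by omega)]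
          congr 1
        have eM : M' (k.val + 1) = ((m k.succ : ℕ) : ZMod p) := by
          rw [hM']; simp only []
          rw [dif_pos (by omega)]
          congr 1
        rw [e1, e2, eN, eM]
        ring
      by_cases hD : k.val = j'.val
      · have hkcj' : k.castSucc = j' := Fin.ext hD
        have hn0 : ((n k.castSucc : ℕ) : ZMod p) = 0 := by
          rw [hkcj']; exact (ZMod.natCast_eq_zero_iff _ _).mpr hpnj'
        rw [hn0, zero_mul, hc]
        simp only [Fin.val_succ]
        rw [if_neg (by omega), mul_zero]
      · rw [hc]; simp only [Fin.coe_castSucc, Fin.val_succ]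
        rw [if_neg (by omega), if_neg (by omega), mul_zero, mul_zero]
    · rw [Set.mem_singleton_iff.mp hlast, AddMonoidHom.mem_ker, f_single]
      by_cases hr : j'.val = r'
      · have : j' = Fin.last r' := Fin.ext hr
        rw [show ((n (Fin.last r') : ℤ) : ZMod p) = ((n (Fin.last r') : ℕ) : ZMod p)
            by push_cast; ring]
        rw [← this, (ZMod.natCast_eq_zero_iff _ _).mpr hpnj', zero_mul]
      · have hlt : j'.val < r' := lt_of_le_of_ne (Nat.lt_succ_iff.mp j'.isLt) hr
        rw [hc]; simp only []
        rw [if_neg (by simp [Fin.last]; omega), mul_zero]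
  have hle : AddSubgroup.closure (relVectors r' m n) ≤ f.ker :=
    (AddSubgroup.closure_le _).mpr hker
  have hmem : Pi.single j' (1 : ℤ) ∈ AddSubgroup.closure (relVectors r' m n) :=
    (QuotientAddGroup.eq_zero_iff _).mp (h2 (QuotientAddGroup.mk (Pi.single j' (1 : ℤ))))
  have hzero : f (Pi.single j' (1 : ℤ)) = 0 := hle hmem
  rw [f_single] at hzero
  rw [hc] at hzero; simp only [] at hzero
  rw [if_pos ⟨Fin.le_def.mp hij', le_rfl⟩, Finset.Ico_self, Finset.prod_empty, mul_one,
    Int.cast_one, one_mul] at hzero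
  have : ∀ l ∈ Finset.Ico i.val j'.val, N' l ≠ 0 := by
    intro l hl
    rw [Finset.mem_Ico] at hl
    have hlr : l < r' + 1 := by omega
    rw [hN']; simp only []
    rw [dif_pos hlr]
    intro h0
    have hdvd : p ∣ n ⟨l, hlr⟩ := (ZMod.natCast_eq_zero_iff _ _).mp h0
    have := hmin ⟨l, hlr⟩ (Fin.le_def.mpr (by simpa using hl.1))
      (Fin.le_def.mpr (by simp; omega)) hdvd
    rw [Fin.le_def] at this
    simp at this
    omega
  exact (Finset.prod_ne_zero_iff.mpr this) hzero
end

/-- The following are equivalent: (1) `G_{m_1,n_1,…,m_r,n_r}` is trivial;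
(2) its abelianization `ℤ^r / ⟨m_1 e_1, n_i e_i − m_{i+1} e_{i+1}, n_r e_r⟩`
is trivial; (3) `gcd(m_i, n_j) = 1` for all `1 ≤ i ≤ j ≤ r`. -/
theorem full_presented_group_trivial_tfae (r' : ℕ)
    (m n : Fin (r' + 1) → ℕ)
    (hm : ∀ i, 0 < m i) (hn : ∀ j, 0 < n j) :
    List.TFAE
      [∀ x : PresentedGroup (fullRels r' m n), x = 1,
       ∀ x : (Fin (r' + 1) → ℤ) ⧸ AddSubgroup.closure (relVectors r' m n),
         x = 0,
       ∀ i j : Fin (r' + 1), i ≤ j → Nat.gcd (m i) (n j) = 1] := by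
  tfae_have 1 → 2 := fun h1 x => dir12 h1 x
  tfae_have 2 → 3 := fun h2 i j hij => dir23 hm h2 i j hij
  tfae_have 3 → 1 := fun h3 x => dir31 hm hn h3 x
  tfae_finish
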